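/- arXiv:1907.05786 — 3 statements merged into one kernel-verified Lean document; each statement's English description precedes it below -/
import Mathlib

section
/- Let a > 0, b > 0, c ≥ 0 be real with b² > 4ac, and let r₋ < r₊ be the two roots of a r² − b r + c = 0 (both nonnegative, r₊ > 0). Then ∫_{r₋}^{r₊} √(−a r² + b r − c) / r dr = π ( b/(2√a) − √c ). In particular, with a = 2m|E|, b = 2m e² Z, c = p_φ², this yields the Sommerfeld radial action identity ∮ p_r dr = 2π( √(m e⁴ Z²/(2|E|)) − |p_φ| ) for the Kepler problem with energy E < 0 and angular momentum p_φ. -/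
/-!
By Vieta, `-a r² + b r - c = a (r - r₋) (r₊ - r)`, so the integral is `√a` times
`∫_α^β √Q / r dr`, `Q = (r - α)(β - r)`, with `α = r₋ ≥ 0`, `β = r₊`. Writing
`√Q / r = (α + β - r) / √Q - αβ / (r √Q)` gives the primitive
`√Q + (α+β)/2 · arcsin((2r-α-β)/(β-α)) - √(αβ) · arcsin(((α+β) r - 2αβ)/((β-α) r))`,
whose arcsine arguments are `∓1` at `r = α, β`; hence the value `π ((α + β)/2 - √(αβ))`.
The integrand is a nonnegative derivative, so it is integrable even when `α = 0`.
-/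

open intervalIntegral MeasureTheory Set Real

theorem HasDerivAt.arcsin {f : ℝ → ℝ} {f' x : ℝ} (hf : HasDerivAt f f' x) (h : |f x| < 1) :
    HasDerivAt (fun y => arcsin (f y)) (f' / √(1 - f x ^ 2)) x := by
  obtain ⟨h₁, h₂⟩ := abs_lt.1 h
  exact ((hasDerivAt_arcsin h₁.ne' h₂.ne).comp x hf).congr_deriv (by ring)

section

variable {α β x : ℝ}

lemma hasDerivAt_sqrt_mul_sub (hx : x ∈ Ioo α β) :
    HasDerivAt (fun r => √((r - α) * (β - r)))
      ((α + β - 2 * x) / (2 * √((x - α) * (β - x)))) x := by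
  have hQ : (x - α) * (β - x) ≠ 0 := (mul_pos (sub_pos.2 hx.1) (sub_pos.2 hx.2)).ne'
  refine ((((hasDerivAt_id' x).sub_const α).mul ((hasDerivAt_id' x).const_sub β)).sqrt hQ
    ).congr_deriv ?_
  simp only [Pi.mul_apply]
  ring

lemma hasDerivAt_arcsin_affine (hx : x ∈ Ioo α β) :
    HasDerivAt (fun r => arcsin ((2 * r - α - β) / (β - α)))
      (1 / √((x - α) * (β - x))) x := by
  have hβα : 0 < β - α := sub_pos.2 (hx.1.trans hx.2)
  have hQ : 0 < (x - α) * (β - x) := mul_pos (sub_pos.2 hx.1) (sub_pos.2 hx.2)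
  have hsq : 1 - ((2 * x - α - β) / (β - α)) ^ 2
      = (2 * √((x - α) * (β - x)) / (β - α)) ^ 2 := by
    rw [div_pow, div_pow, mul_pow, sq_sqrt hQ.le]
    field_simp
    ring
  have hlt : |(2 * x - α - β) / (β - α)| < 1 := by
    rw [← sq_lt_one_iff_abs_lt_one]
    have : 0 < (2 * √((x - α) * (β - x)) / (β - α)) ^ 2 := by positivity
    linarith
  refine (((((hasDerivAt_id' x).const_mul 2).sub_const α).sub_const β).div_const (β - α)
    |>.arcsin hlt).congr_deriv ?_
  rw [hsq, sqrt_sq (by positivity)]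
  field_simp

lemma hasDerivAt_sqrt_mul_arcsin (hα : 0 ≤ α) (hx : x ∈ Ioo α β) :
    HasDerivAt (fun r => √(α * β) * arcsin (((α + β) * r - 2 * α * β) / ((β - α) * r)))
      (α * β / (x * √((x - α) * (β - x)))) x := by
  rcases hα.eq_or_lt with rfl | hα
  · simpa using hasDerivAt_const x (0 : ℝ)
  have hx0 : 0 < x := hα.trans hx.1
  have hβ : 0 < β := hx0.trans hx.2
  have hβα : 0 < β - α := sub_pos.2 (hx.1.trans hx.2)
  have hQ : 0 < (x - α) * (β - x) := mul_pos (sub_pos.2 hx.1) (sub_pos.2 hx.2)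
  have hsq : 1 - (((α + β) * x - 2 * α * β) / ((β - α) * x)) ^ 2
      = (2 * √(α * β) * √((x - α) * (β - x)) / ((β - α) * x)) ^ 2 := by
    rw [div_pow, div_pow, mul_pow, mul_pow, mul_pow, sq_sqrt hQ.le, sq_sqrt (by positivity)]
    field_simp
    ring
  have hlt : |((α + β) * x - 2 * α * β) / ((β - α) * x)| < 1 := by
    rw [← sq_lt_one_iff_abs_lt_one]
    have : 0 < (2 * √(α * β) * √((x - α) * (β - x)) / ((β - α) * x)) ^ 2 := by positivity
    linarith
  have hinner := (((hasDerivAt_id' x).const_mul (α + β)).sub_const (2 * α * β)).div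
    ((hasDerivAt_id' x).const_mul (β - α)) (by positivity)
  refine ((hinner.arcsin hlt).const_mul √(α * β)).congr_deriv ?_
  rw [Pi.div_apply, hsq, sqrt_sq (by positivity)]
  field_simp
  ring

/-- For `α = 0` the last term vanishes identically, so the primitive stays continuous at
`r = 0`, where the arcsine argument degenerates to `0 / 0`. -/
noncomputable def radialActionPrimitive (α β r : ℝ) : ℝ :=
  √((r - α) * (β - r)) + (α + β) / 2 * arcsin ((2 * r - α - β) / (β - α))
    - √(α * β) * arcsin (((α + β) * r - 2 * α * β) / ((β - α) * r))

lemma hasDerivAt_radialActionPrimitive (hα : 0 ≤ α) (hx : x ∈ Ioo α β) :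
    HasDerivAt (radialActionPrimitive α β) (√((x - α) * (β - x)) / x) x := by
  have hx0 : 0 < x := hα.trans_lt hx.1
  have hQ : 0 < (x - α) * (β - x) := mul_pos (sub_pos.2 hx.1) (sub_pos.2 hx.2)
  refine (((hasDerivAt_sqrt_mul_sub hx).add ((hasDerivAt_arcsin_affine hx).const_mul _)).sub
    (hasDerivAt_sqrt_mul_arcsin hα hx)).congr_deriv ?_
  have hs : √((x - α) * (β - x)) ^ 2 = (x - α) * (β - x) := sq_sqrt hQ.le
  field_simp
  linear_combination -2 * hs

lemma continuousOn_radialActionPrimitive (hα : 0 ≤ α) (hαβ : α < β) :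
    ContinuousOn (radialActionPrimitive α β) (Icc α β) := by
  refine (Continuous.continuousOn (by fun_prop)).sub ?_
  rcases hα.eq_or_lt with rfl | hα
  · simpa using continuousOn_const
  refine continuousOn_const.mul (continuous_arcsin.comp_continuousOn ?_)
  exact ContinuousOn.div (by fun_prop) (by fun_prop) fun r hr =>
    mul_ne_zero (sub_pos.2 hαβ).ne' (hα.trans_le hr.1).ne'

lemma radialActionPrimitive_right (hα : 0 ≤ α) (hαβ : α < β) :
    radialActionPrimitive α β β = (α + β) / 2 * (π / 2) - √(α * β) * (π / 2) := by
  have hβ : 0 < β := hα.trans_lt hαβ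
  have hβα : β - α ≠ 0 := (sub_pos.2 hαβ).ne'
  have h₁ : (2 * β - α - β) / (β - α) = 1 := by field_simp; ring
  have h₂ : ((α + β) * β - 2 * α * β) / ((β - α) * β) = 1 := by field_simp; ring
  simp [radialActionPrimitive, h₁, h₂]

lemma radialActionPrimitive_left (hα : 0 ≤ α) (hαβ : α < β) :
    radialActionPrimitive α β α = -((α + β) / 2 * (π / 2)) + √(α * β) * (π / 2) := by
  have hβα : β - α ≠ 0 := (sub_pos.2 hαβ).ne'
  have h₁ : (2 * α - α - β) / (β - α) = -1 := by field_simp; ring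
  rcases hα.eq_or_lt with rfl | hα
  · simp only [radialActionPrimitive, h₁, sub_self, zero_mul, sqrt_zero, arcsin_neg_one]
    ring
  have h₂ : ((α + β) * α - 2 * α * β) / ((β - α) * α) = -1 := by field_simp; ring
  simp [radialActionPrimitive, h₁, h₂]

theorem integral_sqrt_mul_sub_div_self (hα : 0 ≤ α) (hαβ : α < β) :
    ∫ r in α..β, √((r - α) * (β - r)) / r = π * ((α + β) / 2 - √(α * β)) := by
  have hderiv := fun x hx => hasDerivAt_radialActionPrimitive (β := β) (x := x) hα hx
  have hcont := continuousOn_radialActionPrimitive hα hαβ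
  have hint : IntervalIntegrable (fun r => √((r - α) * (β - r)) / r) volume α β :=
    (intervalIntegrable_iff_integrableOn_Ioc_of_le hαβ.le).2 <|
      integrableOn_deriv_of_nonneg hcont hderiv fun x hx =>
        div_nonneg (sqrt_nonneg _) (hα.trans hx.1.le)
  rw [integral_eq_sub_of_hasDerivAt_of_le hαβ.le hcont hderiv hint,
    radialActionPrimitive_right hα hαβ, radialActionPrimitive_left hα hαβ]
  ring

end

lemma vieta_of_quadratic_roots {R : Type*} [CommRing R] [IsDomain R] {a b c x y : R}
    (hxy : x ≠ y) (hx : a * x ^ 2 - b * x + c = 0) (hy : a * y ^ 2 - b * y + c = 0) :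
    a * (x + y) = b ∧ a * (x * y) = c := by
  have hsum : a * (x + y) = b := by
    have : (x - y) * (a * (x + y) - b) = 0 := by linear_combination hx - hy
    exact sub_eq_zero.1 ((mul_eq_zero.1 this).resolve_left (sub_ne_zero.2 hxy))
  exact ⟨hsum, by linear_combination x * hsum - hx⟩

lemma nonneg_of_quadratic_root {a b c r : ℝ} (ha : 0 ≤ a) (hb : 0 < b) (hc : 0 ≤ c)
    (hr : a * r ^ 2 - b * r + c = 0) : 0 ≤ r := by
  by_contra! h
  nlinarith [mul_nonneg ha (sq_nonneg r), mul_pos_of_neg_of_neg (neg_neg_of_pos hb) h]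

theorem sommerfeld_radial_action_integral_general
    (a b c : ℝ) (ha : 0 < a) (hb : 0 < b) (hc : 0 ≤ c)
    (rm rp : ℝ) (hlt : rm < rp)
    (hrm : a * rm ^ 2 - b * rm + c = 0)
    (hrp : a * rp ^ 2 - b * rp + c = 0) :
    ∫ r in rm..rp, Real.sqrt (-a * r ^ 2 + b * r - c) / r
      = Real.pi * (b / (2 * Real.sqrt a) - Real.sqrt c) := by
  obtain ⟨hsum, hprod⟩ := vieta_of_quadratic_roots hlt.ne hrm hrp
  have hfactor (r : ℝ) :
      √(-a * r ^ 2 + b * r - c) / r = √a * (√((r - rm) * (rp - r)) / r) := by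
    rw [← mul_div_assoc, ← sqrt_mul ha.le]
    congr 2
    linear_combination -r * hsum + hprod
  have hrm0 : 0 ≤ rm := nonneg_of_quadratic_root ha.le hb hc hrm
  simp_rw [hfactor]
  rw [intervalIntegral.integral_const_mul, integral_sqrt_mul_sub_div_self hrm0 hlt,
    ← hsum, ← hprod, sqrt_mul ha.le]
  have hsa : √a ^ 2 = a := sq_sqrt ha.le
  field_simp
  rw [hsa]
  ring

/-- **The Sommerfeld radial action integral.**
If `r₋ < r₊` are the two roots of `a r² − b r + c = 0` (with `a, b > 0`,
`c ≥ 0`, `b² > 4ac`), then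
`∫_{r₋}^{r₊} √(−a r² + b r − c)/r dr = π (b/(2√a) − √c)`. -/
theorem sommerfeld_radial_action_integral
    (a b c : ℝ) (ha : 0 < a) (hb : 0 < b) (hc : 0 ≤ c)
    (hdisc : b ^ 2 > 4 * a * c)
    (rm rp : ℝ) (hlt : rm < rp)
    (hrm : a * rm ^ 2 - b * rm + c = 0)
    (hrp : a * rp ^ 2 - b * rp + c = 0) :
    ∫ r in rm..rp, Real.sqrt (-a * r ^ 2 + b * r - c) / r
      = Real.pi * (b / (2 * Real.sqrt a) - Real.sqrt c) :=
  sommerfeld_radial_action_integral_general a b c ha hb hc rm rp hlt hrm hrp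
end

section
/- Dipole selection rule. Let m, m' ∈ ℤ, and let ψ, ψ' : ℝ³ → ℂ be continuous functions that transform under rotations about the x₃-axis as ψ(R₃(φ)x) = e^{imφ} ψ(x) and ψ'(R₃(φ)x) = e^{im'φ} ψ'(x) for all φ ∈ ℝ and x ∈ ℝ³. Assume x ↦ |x| |ψ(x)| |ψ'(x)| is integrable on ℝ³. If |m − m'| ≥ 2, then the dipole moments vanish: ∫_{ℝ³} x_j ψ(x) conj(ψ'(x)) dx = 0 for j = 1, 2, 3. Moreover, for j = 3 the integral vanishes whenever m ≠ m'. -/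
/-!
Rotation about the `x₃`-axis preserves Lebesgue measure, so if `f(R₃(φ)x) = e^{inφ} f(x)` then
`∫ f = e^{inφ} ∫ f` for every `φ`, and `∫ f = 0` once `n ≠ 0`. The density `ψ · conj ψ'` transforms
with `n = m − m'`, and multiplying it by `x₃`, `x₁ + i x₂` or `x₁ − i x₂` shifts `n` by `0`, `1`
or `−1`. Hence `∫ x₃ ψ conj ψ' = 0` for `m ≠ m'`, and for `|m − m'| ≥ 2` both
`∫ (x₁ ± i x₂) ψ conj ψ'` vanish, which gives the first two components.
-/

noncomputable section

open MeasureTheory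

/-- Rotation of ℝ³ by angle `φ` around the `x₃`-axis. -/
def R3 (φ : ℝ) (x : Fin 3 → ℝ) : Fin 3 → ℝ :=
  ![x 0 * Real.cos φ - x 1 * Real.sin φ, x 0 * Real.sin φ + x 1 * Real.cos φ, x 2]

open Complex

def rotationMatrix3 (φ : ℝ) : Matrix (Fin 3) (Fin 3) ℝ :=
  !![Real.cos φ, -Real.sin φ, 0; Real.sin φ, Real.cos φ, 0; 0, 0, 1]

lemma coe_toLin'_rotationMatrix3 (φ : ℝ) : ⇑(Matrix.toLin' (rotationMatrix3 φ)) = R3 φ := by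
  ext x i
  fin_cases i <;>
    simp only [rotationMatrix3, R3, Matrix.toLin'_apply, Matrix.mulVec, dotProduct,
      Fin.sum_univ_three, Matrix.of_apply, Matrix.cons_val', Matrix.cons_val_fin_one,
      Matrix.cons_val_zero, Matrix.cons_val_one, Matrix.cons_val, Fin.zero_eta, Fin.mk_one,
      Fin.reduceFinMk, Fin.isValue] <;> ring

lemma det_rotationMatrix3 (φ : ℝ) : (rotationMatrix3 φ).det = 1 := by
  simp [rotationMatrix3, Matrix.det_fin_three, ← sq, Real.cos_sq_add_sin_sq]

lemma R3_neg_apply_R3 (φ : ℝ) (x : Fin 3 → ℝ) : R3 (-φ) (R3 φ x) = x := by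
  ext i
  fin_cases i <;>
    simp only [R3, Real.cos_neg, Real.sin_neg, Matrix.cons_val_zero, Matrix.cons_val_one,
      Matrix.cons_val, Fin.zero_eta, Fin.mk_one, Fin.reduceFinMk, Fin.isValue]
  · linear_combination x 0 * Real.sin_sq_add_cos_sq φ
  · linear_combination x 1 * Real.sin_sq_add_cos_sq φ

lemma continuous_R3 (φ : ℝ) : Continuous (R3 φ) := by
  unfold R3
  fun_prop

def R3MeasurableEquiv (φ : ℝ) : (Fin 3 → ℝ) ≃ᵐ (Fin 3 → ℝ) where
  toFun := R3 φ
  invFun := R3 (-φ)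
  left_inv := R3_neg_apply_R3 φ
  right_inv x := by simpa using R3_neg_apply_R3 (-φ) x
  measurable_toFun := (continuous_R3 φ).measurable
  measurable_invFun := (continuous_R3 (-φ)).measurable

lemma measurePreserving_R3 (φ : ℝ) : MeasurePreserving (R3 φ) := by
  refine ⟨(R3MeasurableEquiv φ).measurable, ?_⟩
  have hdet : LinearMap.det (Matrix.toLin' (rotationMatrix3 φ)) = 1 := by
    rw [LinearMap.det_toLin', det_rotationMatrix3]
  rw [← coe_toLin'_rotationMatrix3,
    Measure.map_linearMap_addHaar_eq_smul_addHaar _ (by simp [hdet]), hdet]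
  simp

lemma integral_comp_R3 {E : Type*} [NormedAddCommGroup E] [NormedSpace ℝ E] (φ : ℝ)
    (g : (Fin 3 → ℝ) → E) : ∫ x, g (R3 φ x) = ∫ x, g x :=
  (measurePreserving_R3 φ).integral_comp' (f := R3MeasurableEquiv φ) g

lemma integrable_coord_mul {ι : Type*} [Fintype ι] {μ : Measure (ι → ℝ)} {F : (ι → ℝ) → ℂ}
    (hF : AEStronglyMeasurable F μ) (hint : Integrable (fun x => √(∑ i, x i ^ 2) * ‖F x‖) μ)
    (j : ι) : Integrable (fun x => (x j : ℂ) * F x) μ := by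
  refine hint.mono ((continuous_ofReal.comp (continuous_apply j)).aestronglyMeasurable.mul hF) ?_
  refine .of_forall fun x => ?_
  have hcoord : |x j| ≤ √(∑ i, x i ^ 2) :=
    Real.abs_le_sqrt (Finset.single_le_sum (fun i _ => sq_nonneg (x i)) (Finset.mem_univ j))
  simpa [abs_of_nonneg (Real.sqrt_nonneg _)] using
    mul_le_mul_of_nonneg_right hcoord (norm_nonneg (F x))

/-- `f` is an eigenfunction of `L₃ = -i ∂_φ` with eigenvalue `n`. -/
def HasMagneticNumber (n : ℤ) (f : (Fin 3 → ℝ) → ℂ) : Prop :=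
  ∀ (φ : ℝ) (x : Fin 3 → ℝ), f (R3 φ x) = exp (I * n * φ) * f x

lemma hasMagneticNumber_coord_two : HasMagneticNumber 0 fun x => (x 2 : ℂ) := fun _ _ => by
  simp [R3]

lemma hasMagneticNumber_coord_zero_add_I_mul_coord_one :
    HasMagneticNumber 1 fun x => (x 0 : ℂ) + I * x 1 := fun φ x => by
  have hexp : exp (I * ((1 : ℤ) : ℂ) * φ) = cos φ + sin φ * I := by
    rw [show I * ((1 : ℤ) : ℂ) * φ = φ * I by push_cast; ring, exp_mul_I]
  rw [hexp]
  simp only [R3, Matrix.cons_val_zero, Matrix.cons_val_one, ofReal_sub, ofReal_add, ofReal_mul,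
    ofReal_cos, ofReal_sin]
  linear_combination (-(x 1 : ℂ) * sin φ) * I_sq

lemma hasMagneticNumber_coord_zero_sub_I_mul_coord_one :
    HasMagneticNumber (-1) fun x => (x 0 : ℂ) - I * x 1 := fun φ x => by
  have hexp : exp (I * ((-1 : ℤ) : ℂ) * φ) = cos φ - sin φ * I := by
    rw [show I * ((-1 : ℤ) : ℂ) * φ = -φ * I by push_cast; ring, exp_mul_I, cos_neg, sin_neg]
    ring
  rw [hexp]
  simp only [R3, Matrix.cons_val_zero, Matrix.cons_val_one, ofReal_sub, ofReal_add, ofReal_mul,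
    ofReal_cos, ofReal_sin]
  linear_combination (-(x 1 : ℂ) * sin φ) * I_sq

namespace HasMagneticNumber

variable {n k : ℤ} {f g : (Fin 3 → ℝ) → ℂ}

lemma mul (hf : HasMagneticNumber n f) (hg : HasMagneticNumber k g) :
    HasMagneticNumber (n + k) fun x => f x * g x := fun φ x => by
  dsimp only
  rw [hf, hg, Int.cast_add, mul_add, add_mul, exp_add]
  ring

lemma conj (hf : HasMagneticNumber n f) :
    HasMagneticNumber (-n) fun x => starRingEnd ℂ (f x) := fun φ x => by
  dsimp only
  rw [hf, map_mul, ← exp_conj]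
  simp [conj_ofReal]

lemma integral_eq_zero (hf : HasMagneticNumber n f) (hn : n ≠ 0) : ∫ x, f x = 0 := by
  have hexp : exp (I * n * (Real.pi / n : ℝ)) = -1 := by
    rw [← exp_pi_mul_I]
    congr 1
    push_cast
    field_simp
  have h := integral_comp_R3 (Real.pi / n) f
  simp only [hf (Real.pi / n), integral_const_mul, hexp] at h
  linear_combination -h / 2

lemma integral_coord_two_mul_eq_zero (hf : HasMagneticNumber n f) (hn : n ≠ 0) :
    ∫ x, (x 2 : ℂ) * f x = 0 :=
  (hasMagneticNumber_coord_two.mul hf).integral_eq_zero (by omega)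

lemma integral_coord_mul_eq_zero (hf : HasMagneticNumber n f) (hn : 2 ≤ |n|)
    (hint : ∀ j, Integrable fun x => (x j : ℂ) * f x) (j : Fin 3) :
    ∫ x, (x j : ℂ) * f x = 0 := by
  have hn' : n ≤ -2 ∨ 2 ≤ n := le_abs'.mp hn
  have hplus := (hasMagneticNumber_coord_zero_add_I_mul_coord_one.mul hf).integral_eq_zero
    (by omega)
  have hminus := (hasMagneticNumber_coord_zero_sub_I_mul_coord_one.mul hf).integral_eq_zero
    (by omega)
  simp only [add_mul, sub_mul, mul_assoc] at hplus hminus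
  rw [integral_add (hint 0) ((hint 1).const_mul I), integral_const_mul] at hplus
  rw [integral_sub (hint 0) ((hint 1).const_mul I), integral_const_mul] at hminus
  have h0 : ∫ x, (x 0 : ℂ) * f x = 0 := by linear_combination (hplus + hminus) / 2
  have h1 : ∫ x, (x 1 : ℂ) * f x = 0 := by
    linear_combination (-I / 2) * (hplus - hminus) + (∫ x, (x 1 : ℂ) * f x) * I_sq
  fin_cases j
  exacts [h0, h1, hf.integral_coord_two_mul_eq_zero (by omega)]

end HasMagneticNumber

/-- **Dipole selection rule.** If `ψ, ψ'` transform under rotations about the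
`x₃`-axis with angular quantum numbers `m, m'`, then the dipole moments
`∫ x_j ψ conj(ψ') dx` vanish when `|m − m'| ≥ 2`, and the third component
vanishes whenever `m ≠ m'`. -/
theorem dipole_selection_rule
    (m m' : ℤ)
    (ψ ψ' : (Fin 3 → ℝ) → ℂ) (hψ : Continuous ψ) (hψ' : Continuous ψ')
    (hrot : ∀ (φ : ℝ) (x : Fin 3 → ℝ),
      ψ (R3 φ x) = Complex.exp (Complex.I * m * φ) * ψ x)
    (hrot' : ∀ (φ : ℝ) (x : Fin 3 → ℝ),
      ψ' (R3 φ x) = Complex.exp (Complex.I * m' * φ) * ψ' x)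
    (hint : Integrable (fun x : Fin 3 → ℝ =>
      Real.sqrt (∑ i, x i ^ 2) * ‖ψ x‖ * ‖ψ' x‖)) :
    (2 ≤ |m - m'| → ∀ j : Fin 3,
      (∫ x : Fin 3 → ℝ, (x j : ℂ) * ψ x * (starRingEnd ℂ) (ψ' x)) = 0)
    ∧ (m ≠ m' →
      (∫ x : Fin 3 → ℝ, (x 2 : ℂ) * ψ x * (starRingEnd ℂ) (ψ' x)) = 0) := by
  have hF : HasMagneticNumber (m - m') fun x => ψ x * starRingEnd ℂ (ψ' x) :=
    sub_eq_add_neg m m' ▸ HasMagneticNumber.mul hrot (HasMagneticNumber.conj hrot')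
  have hmoment (j : Fin 3) : Integrable fun x => (x j : ℂ) * (ψ x * starRingEnd ℂ (ψ' x)) :=
    integrable_coord_mul (hψ.mul (continuous_conj.comp hψ')).aestronglyMeasurable
      (by simpa [mul_assoc] using hint) j
  simp only [mul_assoc]
  exact ⟨fun hmm' => hF.integral_coord_mul_eq_zero hmm' hmoment,
    fun hmm' => hF.integral_coord_two_mul_eq_zero (sub_ne_zero.mpr hmm')⟩
end
end

section
/- The commutant of the Lorentz group in M₄(ℝ) is trivial. Let η = diag(1, −1, −1, −1) be the Minkowski matrix in the 4×4 real matrices. If T is a 4×4 real matrix such that T Λ = Λ T for every 4×4 real matrix Λ satisfying Λᵀ η Λ = η, then there exists c ∈ ℝ with T = c · I₄. (Consequently any Lorentz-covariant linear correspondence between the energy–momentum vector (E, p) and the frequency–wave vector (ω, k) is given by a single scalar, as in the de Broglie relation (p, E) = ℏ(k, ω).) -/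
open Matrix

set_option maxHeartbeats 2000000 in
/-- **The commutant of the Lorentz group in M₄(ℝ) is trivial.**
If a real `4×4` matrix `T` commutes with every Lorentz matrix `L`
(i.e. every `L` with `Lᵀ η L = η`, where `η = diag(1,−1,−1,−1)`), then
`T` is a scalar multiple of the identity. -/
theorem lorentz_commutant_trivial
    (η : Matrix (Fin 4) (Fin 4) ℝ)
    (hη : η = Matrix.diagonal ![1, -1, -1, -1])
    (T : Matrix (Fin 4) (Fin 4) ℝ)
    (hT : ∀ L : Matrix (Fin 4) (Fin 4) ℝ, Lᵀ * η * L = η → T * L = L * T) :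
    ∃ c : ℝ, T = c • (1 : Matrix (Fin 4) (Fin 4) ℝ) := by
  subst hη
  have h1 := hT !![1,0,0,0; 0,-1,0,0; 0,0,1,0; 0,0,0,1] (by
    ext i j; fin_cases i <;> fin_cases j <;>
      simp [Matrix.mul_apply, Fin.sum_univ_four, Matrix.transpose_apply,
        Matrix.diagonal, Matrix.vecHead, Matrix.vecTail])
  have h2 := hT !![1,0,0,0; 0,1,0,0; 0,0,-1,0; 0,0,0,1] (by
    ext i j; fin_cases i <;> fin_cases j <;>
      simp [Matrix.mul_apply, Fin.sum_univ_four, Matrix.transpose_apply,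
        Matrix.diagonal, Matrix.vecHead, Matrix.vecTail])
  have h3 := hT !![1,0,0,0; 0,1,0,0; 0,0,1,0; 0,0,0,-1] (by
    ext i j; fin_cases i <;> fin_cases j <;>
      simp [Matrix.mul_apply, Fin.sum_univ_four, Matrix.transpose_apply,
        Matrix.diagonal, Matrix.vecHead, Matrix.vecTail])
  have hB1 := hT !![5/4,3/4,0,0; 3/4,5/4,0,0; 0,0,1,0; 0,0,0,1] (by
    ext i j; fin_cases i <;> fin_cases j <;>
      simp [Matrix.mul_apply, Fin.sum_univ_four, Matrix.transpose_apply,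
        Matrix.diagonal, Matrix.vecHead, Matrix.vecTail] <;> norm_num)
  have hB2 := hT !![5/4,0,3/4,0; 0,1,0,0; 3/4,0,5/4,0; 0,0,0,1] (by
    ext i j; fin_cases i <;> fin_cases j <;>
      simp [Matrix.mul_apply, Fin.sum_univ_four, Matrix.transpose_apply,
        Matrix.diagonal, Matrix.vecHead, Matrix.vecTail] <;> norm_num)
  have hB3 := hT !![5/4,0,0,3/4; 0,1,0,0; 0,0,1,0; 3/4,0,0,5/4] (by
    ext i j; fin_cases i <;> fin_cases j <;>
      simp [Matrix.mul_apply, Fin.sum_univ_four, Matrix.transpose_apply,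
        Matrix.diagonal, Matrix.vecHead, Matrix.vecTail] <;> norm_num)
  have t01 : T 0 1 = 0 := by
    have e := congrFun (congrFun h1 0) 1
    simp [Matrix.mul_apply, Fin.sum_univ_four, Matrix.vecHead, Matrix.vecTail] at e; linarith
  have t10 : T 1 0 = 0 := by
    have e := congrFun (congrFun h1 1) 0
    simp [Matrix.mul_apply, Fin.sum_univ_four, Matrix.vecHead, Matrix.vecTail] at e; linarith
  have t12 : T 1 2 = 0 := by
    have e := congrFun (congrFun h1 1) 2
    simp [Matrix.mul_apply, Fin.sum_univ_four, Matrix.vecHead, Matrix.vecTail] at e; linarith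
  have t13 : T 1 3 = 0 := by
    have e := congrFun (congrFun h1 1) 3
    simp [Matrix.mul_apply, Fin.sum_univ_four, Matrix.vecHead, Matrix.vecTail] at e; linarith
  have t21 : T 2 1 = 0 := by
    have e := congrFun (congrFun h1 2) 1
    simp [Matrix.mul_apply, Fin.sum_univ_four, Matrix.vecHead, Matrix.vecTail] at e; linarith
  have t31 : T 3 1 = 0 := by
    have e := congrFun (congrFun h1 3) 1
    simp [Matrix.mul_apply, Fin.sum_univ_four, Matrix.vecHead, Matrix.vecTail] at e; linarith
  have t02 : T 0 2 = 0 := by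
    have e := congrFun (congrFun h2 0) 2
    simp [Matrix.mul_apply, Fin.sum_univ_four, Matrix.vecHead, Matrix.vecTail] at e; linarith
  have t20 : T 2 0 = 0 := by
    have e := congrFun (congrFun h2 2) 0
    simp [Matrix.mul_apply, Fin.sum_univ_four, Matrix.vecHead, Matrix.vecTail] at e; linarith
  have t23 : T 2 3 = 0 := by
    have e := congrFun (congrFun h2 2) 3
    simp [Matrix.mul_apply, Fin.sum_univ_four, Matrix.vecHead, Matrix.vecTail] at e; linarith
  have t32 : T 3 2 = 0 := by
    have e := congrFun (congrFun h2 3) 2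
    simp [Matrix.mul_apply, Fin.sum_univ_four, Matrix.vecHead, Matrix.vecTail] at e; linarith
  have t03 : T 0 3 = 0 := by
    have e := congrFun (congrFun h3 0) 3
    simp [Matrix.mul_apply, Fin.sum_univ_four, Matrix.vecHead, Matrix.vecTail] at e; linarith
  have t30 : T 3 0 = 0 := by
    have e := congrFun (congrFun h3 3) 0
    simp [Matrix.mul_apply, Fin.sum_univ_four, Matrix.vecHead, Matrix.vecTail] at e; linarith
  have d1 : T 1 1 = T 0 0 := by
    have e := congrFun (congrFun hB1 0) 1
    simp [Matrix.mul_apply, Fin.sum_univ_four, Matrix.vecHead, Matrix.vecTail] at e; linarith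
  have d2 : T 2 2 = T 0 0 := by
    have e := congrFun (congrFun hB2 0) 2
    simp [Matrix.mul_apply, Fin.sum_univ_four, Matrix.vecHead, Matrix.vecTail] at e; linarith
  have d3 : T 3 3 = T 0 0 := by
    have e := congrFun (congrFun hB3 0) 3
    simp [Matrix.mul_apply, Fin.sum_univ_four, Matrix.vecHead, Matrix.vecTail] at e; linarith
  refine ⟨T 0 0, ?_⟩
  ext i j
  fin_cases i <;> fin_cases j <;>
    simp only [Matrix.smul_apply, Matrix.one_apply, smul_eq_mul] <;>
    norm_num <;>
    first
      | rfl
      | assumption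
      | linarith
end
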